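/- Double-robust moment condition under a correctly specified linear X-model (model (b)): if the null hypothesis β₀ = β* holds and Y = Xβ* + g(Z) + ε with X = Zᵀθ₀ + η, where g is an arbitrary (measurable, bounded on the support of Z) function, then E[(W − Zᵀθ₀)(V − Zᵀγ₀) + σ_U²β*] = 0; equivalently, E[(η + U)(ε − Uβ* + g(Z) − Zᵀγ₀) + σ_U²β*] = 0. -/

import Mathlib

open MeasureTheory ProbabilityTheory Filter Real Matrix Finset

noncomputable section

/-- The standard normal cumulative distribution function `Φ`. -/
def stdNormalCDF (t : ℝ) : ℝ :=
  (∫ x in Set.Iic t, Real.exp (-(x ^ 2) / 2)) / Real.sqrt (2 * Real.pi)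

/-- The sub-Gaussian norm of `S` is at most `K`:
`‖S‖_{ψ₂} = sup_{q ≥ 1} q^{-1/2} (E|S|^q)^{1/q} ≤ K`. -/
def SubGNormLe {Ω : Type*} [MeasurableSpace Ω] (μ : Measure Ω) (S : Ω → ℝ) (K : ℝ) : Prop :=
  ∀ q : ℝ, 1 ≤ q → (∫ ω, |S ω| ^ q ∂μ) ^ (1 / q) ≤ K * Real.sqrt q

/-- The sub-exponential norm of `S` is at most `K`:
`‖S‖_{ψ₁} = sup_{q ≥ 1} q⁻¹ (E|S|^q)^{1/q} ≤ K`. -/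
def SubENormLe {Ω : Type*} [MeasurableSpace Ω] (μ : Measure Ω) (S : Ω → ℝ) (K : ℝ) : Prop :=
  ∀ q : ℝ, 1 ≤ q → (∫ ω, |S ω| ^ q ∂μ) ^ (1 / q) ≤ K * q

/-- Population Gram matrix `Σ_ZZ = E[Z Zᵀ]`. -/
def pGram {Ω : Type*} [MeasurableSpace Ω] (μ : Measure Ω) {p : ℕ} (Z : Ω → Fin p → ℝ) :
    Matrix (Fin p) (Fin p) ℝ :=
  Matrix.of fun j k => ∫ ω, Z ω j * Z ω k ∂μ

/-- Population least-squares coefficient `(E[Z Zᵀ])⁻¹ E[Z R]`. -/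
def pCoef {Ω : Type*} [MeasurableSpace Ω] (μ : Measure Ω) {p : ℕ} (Z : Ω → Fin p → ℝ)
    (R : Ω → ℝ) : Fin p → ℝ :=
  (pGram μ Z)⁻¹ *ᵥ fun j => ∫ ω, Z ω j * R ω ∂μ

/-- Sample Gram matrix `n⁻¹ Σᵢ Zᵢ Zᵢᵀ`. -/
def sGram {Ω : Type*} (p n : ℕ) (Z : ℕ → Ω → Fin p → ℝ) (ω : Ω) :
    Matrix (Fin p) (Fin p) ℝ :=
  Matrix.of fun j k => (n : ℝ)⁻¹ * ∑ i ∈ Finset.range n, Z i ω j * Z i ω k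

/-- Ordinary least squares estimator of the regression of `R` on `Z`. -/
def olsHat {Ω : Type*} (p n : ℕ) (Z : ℕ → Ω → Fin p → ℝ) (R : ℕ → Ω → ℝ) (ω : Ω) :
    Fin p → ℝ :=
  (sGram p n Z ω)⁻¹ *ᵥ fun j => (n : ℝ)⁻¹ * ∑ i ∈ Finset.range n, Z i ω j * R i ω

/-- The score statistic `T`. -/
def Tstat {Ω : Type*} (p n : ℕ) (Z : ℕ → Ω → Fin p → ℝ) (W V : ℕ → Ω → ℝ)
    (θh γh : Ω → Fin p → ℝ) (σU2 βs : ℝ) (ω : Ω) : ℝ :=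
  (Real.sqrt n)⁻¹ * ∑ i ∈ Finset.range n,
    ((W i ω - ∑ j, Z i ω j * θh ω j) * (V i ω - ∑ j, Z i ω j * γh ω j) + σU2 * βs)

/-- The variance estimator `σ̂²`. -/
def sigHat2 {Ω : Type*} (p n : ℕ) (Z : ℕ → Ω → Fin p → ℝ) (W V : ℕ → Ω → ℝ)
    (θh γh : Ω → Fin p → ℝ) (σU2 βs : ℝ) (ω : Ω) : ℝ :=
  (n : ℝ)⁻¹ * ∑ i ∈ Finset.range n,
    ((W i ω - ∑ j, Z i ω j * θh ω j) * (V i ω - ∑ j, Z i ω j * γh ω j) + σU2 * βs) ^ 2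

/-- The standardized statistic `T_DF = T / σ̂`. -/
def TDF {Ω : Type*} (p n : ℕ) (Z : ℕ → Ω → Fin p → ℝ) (W V : ℕ → Ω → ℝ)
    (θh γh : Ω → Fin p → ℝ) (σU2 βs : ℝ) (ω : Ω) : ℝ :=
  Tstat p n Z W V θh γh σU2 βs ω / Real.sqrt (sigHat2 p n Z W V θh γh σU2 βs ω)

/-- The penalized least-squares objective. -/
def penObj {Ω : Type*} (p n : ℕ) (Z : ℕ → Ω → Fin p → ℝ) (R : ℕ → Ω → ℝ)
    (pen : ℝ → ℝ) (ω : Ω) (γ : Fin p → ℝ) : ℝ :=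
  (2 * n : ℝ)⁻¹ * ∑ i ∈ Finset.range n, (R i ω - ∑ j, Z i ω j * γ j) ^ 2 + ∑ j, pen (γ j)

/-! Under the model, `W - Zᵀθ₀ = η + U` and `V - Zᵀγ₀ = ε - Uβ* + h(Z)` with
`h z = g z - zᵀγ₀`, so the two integrands agree. Writing
`(η + U)(ε - Uβ* + h(Z)) = η(ε - Uβ*) + η h(Z) + U(ε + h(Z)) - β* U²`, the first and third
terms are centred by independence (`E η = E U = 0`), the second because `E[η | Z] = 0`, and
`-β* E[U²] = -σ_U² β*` is exactly cancelled by the correction term. -/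

section MomentCondition

variable {Ω : Type*} {m m₀ : MeasurableSpace Ω} {μ : Measure Ω}

lemma integral_mul_eq_zero_of_indepFun {X Y : Ω → ℝ} (hXY : IndepFun X Y μ)
    (hX : AEStronglyMeasurable X μ) (hY : AEStronglyMeasurable Y μ) (hX₀ : ∫ ω, X ω ∂μ = 0) :
    ∫ ω, X ω * Y ω ∂μ = 0 := by
  rw [hXY.integral_fun_mul_eq_mul_integral hX hY, hX₀, zero_mul]

lemma integral_eq_zero_of_condExp_eq_zero (hm : m ≤ m₀) [SigmaFinite (μ.trim hm)] {f : Ω → ℝ}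
    (hf : μ[f | m] =ᵐ[μ] 0) : ∫ ω, f ω ∂μ = 0 := by
  rw [← integral_condExp hm, integral_congr_ae hf, Pi.zero_def, integral_zero]

lemma integral_mul_eq_zero_of_condExp_eq_zero (hm : m ≤ m₀) [SigmaFinite (μ.trim hm)]
    {f η : Ω → ℝ} (hf : AEStronglyMeasurable[m] f μ) (hfη : Integrable (f * η) μ)
    (hη : Integrable η μ) (hcond : μ[η | m] =ᵐ[μ] 0) : ∫ ω, f ω * η ω ∂μ = 0 := by
  refine integral_eq_zero_of_condExp_eq_zero hm (f := f * η) ?_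
  filter_upwards [condExp_mul_of_aestronglyMeasurable_left hf hfη hη, hcond] with ω hpull hω
  rw [hpull, Pi.mul_apply, hω, Pi.zero_apply, mul_zero]

variable [IsProbabilityMeasure μ] {η U ε H : Ω → ℝ}

lemma integral_corrected_moment_eq (β σ : ℝ) (hη : MemLp η 2 μ) (hU : MemLp U 2 μ)
    (hε : MemLp ε 2 μ) (hH : MemLp H 2 μ) :
    ∫ ω, ((η ω + U ω) * (ε ω - U ω * β + H ω) + σ * β) ∂μ
      = ∫ ω, η ω * (ε ω - U ω * β) ∂μ + ∫ ω, η ω * H ω ∂μ + ∫ ω, U ω * (ε ω + H ω) ∂μ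
        - β * (∫ ω, U ω ^ 2 ∂μ - σ) := by
  have hηεU : Integrable (fun ω => η ω * (ε ω - U ω * β)) μ :=
    hη.integrable_mul (hε.sub (hU.mul_const β))
  have hηH : Integrable (fun ω => η ω * H ω) μ := hη.integrable_mul hH
  have hUεH : Integrable (fun ω => U ω * (ε ω + H ω)) μ := hU.integrable_mul (hε.add hH)
  have hU2 : Integrable (fun ω => β * (U ω ^ 2 - σ)) μ :=
    (hU.integrable_sq.sub (integrable_const σ)).const_mul β
  calc ∫ ω, ((η ω + U ω) * (ε ω - U ω * β + H ω) + σ * β) ∂μ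
      = ∫ ω, (η ω * (ε ω - U ω * β) + η ω * H ω + U ω * (ε ω + H ω) - β * (U ω ^ 2 - σ)) ∂μ :=
        integral_congr_ae (ae_of_all _ fun ω => by ring)
    _ = _ := by
      rw [integral_sub ((hηεU.fun_add hηH).fun_add hUεH) hU2,
        integral_add (hηεU.fun_add hηH) hUεH, integral_add hηεU hηH, integral_const_mul,
        integral_sub hU.integrable_sq (integrable_const σ), integral_const, probReal_univ,
        one_smul]

lemma integral_corrected_moment_eq_zero (hm : m ≤ m₀) {β σ : ℝ} (hη : MemLp η 2 μ)
    (hU : MemLp U 2 μ) (hε : MemLp ε 2 μ) (hH : MemLp H 2 μ) (hHm : AEStronglyMeasurable[m] H μ)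
    (hηcond : μ[η | m] =ᵐ[μ] 0) (hη_indep : IndepFun η (fun ω => (U ω, ε ω)) μ)
    (hU₀ : ∫ ω, U ω ∂μ = 0) (hUvar : ∫ ω, U ω ^ 2 ∂μ = σ)
    (hU_indep : IndepFun U (fun ω => (ε ω, H ω)) μ) :
    ∫ ω, ((η ω + U ω) * (ε ω - U ω * β + H ω) + σ * β) ∂μ = 0 := by
  have hηεU : ∫ ω, η ω * (ε ω - U ω * β) ∂μ = 0 :=
    integral_mul_eq_zero_of_indepFun
      (hη_indep.comp (ψ := fun x : ℝ × ℝ => x.2 - x.1 * β) measurable_id (by fun_prop))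
      hη.aestronglyMeasurable (hε.sub (hU.mul_const β)).aestronglyMeasurable
      (integral_eq_zero_of_condExp_eq_zero hm hηcond)
  have hηH : ∫ ω, η ω * H ω ∂μ = 0 := by
    simp only [mul_comm (η _)]
    exact integral_mul_eq_zero_of_condExp_eq_zero hm hHm (hH.integrable_mul hη)
      (hη.integrable one_le_two) hηcond
  have hUεH : ∫ ω, U ω * (ε ω + H ω) ∂μ = 0 :=
    integral_mul_eq_zero_of_indepFun
      (hU_indep.comp (ψ := fun x : ℝ × ℝ => x.1 + x.2) measurable_id (by fun_prop))
      hU.aestronglyMeasurable (hε.add hH).aestronglyMeasurable hU₀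
  rw [integral_corrected_moment_eq β σ hη hU hε hH, hηεU, hηH, hUεH, hUvar]
  ring

end MomentCondition

theorem statement1_general
    {Ω : Type*} [MeasurableSpace Ω] (μ : Measure Ω) [IsProbabilityMeasure μ]
    {p : ℕ}
    (X Y ε η U W V : Ω → ℝ) (Z : Ω → Fin p → ℝ)
    (g : (Fin p → ℝ) → ℝ) (σU2 βs : ℝ)
    -- measurability
    (hmZ : Measurable Z)
    (hmg : Measurable g)
    -- square integrability
    (hL2ε : MemLp ε 2 μ)
    (hL2η : MemLp η 2 μ) (hL2U : MemLp U 2 μ)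
    (hL2Z : ∀ j, MemLp (fun ω => Z ω j) 2 μ)
    -- observed surrogate and pseudo-response
    (hW : ∀ ω, W ω = X ω + U ω)
    (hV : ∀ ω, V ω = Y ω - W ω * βs)
    -- measurement error: mean zero, variance `σ_U²`, independent of `(X, Z, ε, η)`
    (hU0 : ∫ ω, U ω ∂μ = 0)
    (hUvar : ∫ ω, (U ω) ^ 2 ∂μ = σU2)
    (hUindep : IndepFun U (fun ω => (X ω, Z ω, ε ω, η ω)) μ)
    -- error `η`: conditionally centered given `Z`, variance `σ_η²`, independent of `(U, ε)`
    (hηcond : μ[η | MeasurableSpace.comap Z inferInstance] =ᵐ[μ] 0)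
    (hηindep : IndepFun η (fun ω => (U ω, ε ω)) μ)
    -- model (b): the null `β₀ = β*` holds, `Y = Xβ* + g(Z) + ε` for an arbitrary measurable
    -- `g` bounded on the support of `Z`, and `X = Zᵀθ₀ + η` is a correct linear model
    (θ0 : Fin p → ℝ)
    (hmodelY : ∀ ω, Y ω = X ω * βs + g (Z ω) + ε ω)
    (hmodelX : ∀ ω, X ω = (∑ j, Z ω j * θ0 j) + η ω)
    (hgbd : ∃ M : ℝ, ∀ᵐ ω ∂μ, |g (Z ω)| ≤ M)
    (γ0 : Fin p → ℝ) :
    (∫ ω, ((W ω - ∑ j, Z ω j * θ0 j) * (V ω - ∑ j, Z ω j * γ0 j) + σU2 * βs) ∂μ = 0) ∧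
    (∫ ω, ((η ω + U ω) * (ε ω - U ω * βs + g (Z ω) - ∑ j, Z ω j * γ0 j) + σU2 * βs) ∂μ
      = 0) := by
  set φ : (Fin p → ℝ) → ℝ := fun z => g z - ∑ j, z j * γ0 j with hφ_def
  have hφ : Measurable φ := by fun_prop
  have hsame : ∀ ω, (W ω - ∑ j, Z ω j * θ0 j) * (V ω - ∑ j, Z ω j * γ0 j)
      = (η ω + U ω) * (ε ω - U ω * βs + g (Z ω) - ∑ j, Z ω j * γ0 j) := by
    intro ω; rw [hV, hmodelY, hW, hmodelX]; ring
  suffices key : ∫ ω, ((η ω + U ω) * (ε ω - U ω * βs + φ (Z ω)) + σU2 * βs) ∂μ = 0 by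
    simp only [hsame, hφ_def, ← add_sub_assoc] at key ⊢
    exact ⟨key, key⟩
  have hL2φZ : MemLp (fun ω => φ (Z ω)) 2 μ := by
    obtain ⟨M, hM⟩ := hgbd
    have hgZ : MemLp (fun ω => g (Z ω)) 2 μ :=
      .of_bound (hmg.comp hmZ).aestronglyMeasurable M (by simpa only [Real.norm_eq_abs] using hM)
    exact hgZ.sub (memLp_finsetSum _ fun j _ => (hL2Z j).mul_const (γ0 j))
  exact integral_corrected_moment_eq_zero hmZ.comap_le hL2η hL2U hL2ε hL2φZ
    (hφ.comp (comap_measurable Z)).aestronglyMeasurable hηcond hηindep hU0 hUvar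
    (hUindep.comp (ψ := fun x : ℝ × (Fin p → ℝ) × ℝ × ℝ => (x.2.2.1, φ x.2.1)) measurable_id
      (by fun_prop))

/-- double-robust moment condition under a correctly specified linear
`X`-model (model (b)). -/
theorem statement1
    {Ω : Type*} [MeasurableSpace Ω] (μ : Measure Ω) [IsProbabilityMeasure μ]
    {p : ℕ}
    (X Y ε η U W V : Ω → ℝ) (Z : Ω → Fin p → ℝ)
    (g : (Fin p → ℝ) → ℝ) (σU2 σε2 ση2 βs : ℝ)
    -- measurability
    (hmX : Measurable X) (hmY : Measurable Y) (hmε : Measurable ε)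
    (hmη : Measurable η) (hmU : Measurable U) (hmZ : Measurable Z)
    (hmg : Measurable g)
    -- square integrability
    (hL2X : MemLp X 2 μ) (hL2Y : MemLp Y 2 μ) (hL2ε : MemLp ε 2 μ)
    (hL2η : MemLp η 2 μ) (hL2U : MemLp U 2 μ)
    (hL2Z : ∀ j, MemLp (fun ω => Z ω j) 2 μ)
    -- observed surrogate and pseudo-response
    (hW : ∀ ω, W ω = X ω + U ω)
    (hV : ∀ ω, V ω = Y ω - W ω * βs)
    -- measurement error: mean zero, variance `σ_U²`, independent of `(X, Z, ε, η)`
    (hU0 : ∫ ω, U ω ∂μ = 0)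
    (hUvar : ∫ ω, (U ω) ^ 2 ∂μ = σU2)
    (hUindep : IndepFun U (fun ω => (X ω, Z ω, ε ω, η ω)) μ)
    -- regression error `ε`: mean zero, variance `σ_ε²`, independent of `(X, Z)`
    (hε0 : ∫ ω, ε ω ∂μ = 0)
    (hεvar : ∫ ω, (ε ω) ^ 2 ∂μ = σε2)
    (hεindep : IndepFun ε (fun ω => (X ω, Z ω)) μ)
    -- error `η`: conditionally centered given `Z`, variance `σ_η²`, independent of `(U, ε)`
    (hηcond : μ[η | MeasurableSpace.comap Z inferInstance] =ᵐ[μ] 0)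
    (hηvar : ∫ ω, (η ω) ^ 2 ∂μ = ση2)
    (hηindep : IndepFun η (fun ω => (U ω, ε ω)) μ)
    -- model (b): the null `β₀ = β*` holds, `Y = Xβ* + g(Z) + ε` for an arbitrary measurable
    -- `g` bounded on the support of `Z`, and `X = Zᵀθ₀ + η` is a correct linear model
    (θ0 : Fin p → ℝ)
    (hmodelY : ∀ ω, Y ω = X ω * βs + g (Z ω) + ε ω)
    (hmodelX : ∀ ω, X ω = (∑ j, Z ω j * θ0 j) + η ω)
    (hgbd : ∃ M : ℝ, ∀ᵐ ω ∂μ, |g (Z ω)| ≤ M)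
    -- population least-squares coefficient `γ₀ = Σ_ZZ⁻¹ E[Z V]`, `Σ_ZZ` invertible
    (hGram : IsUnit (pGram μ Z).det)
    (γ0 : Fin p → ℝ)
    (hγ0 : γ0 = pCoef μ Z V)
    -- integrability of the displayed products
    (hint1 : Integrable
      (fun ω => (W ω - ∑ j, Z ω j * θ0 j) * (V ω - ∑ j, Z ω j * γ0 j)) μ)
    (hint2 : Integrable
      (fun ω => (η ω + U ω) * (ε ω - U ω * βs + g (Z ω) - ∑ j, Z ω j * γ0 j)) μ) :
    (∫ ω, ((W ω - ∑ j, Z ω j * θ0 j) * (V ω - ∑ j, Z ω j * γ0 j) + σU2 * βs) ∂μ = 0) ∧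
    (∫ ω, ((η ω + U ω) * (ε ω - U ω * βs + g (Z ω) - ∑ j, Z ω j * γ0 j) + σU2 * βs) ∂μ
      = 0) :=
  statement1_general μ X Y ε η U W V Z g σU2 βs hmZ hmg hL2ε hL2η hL2U hL2Z hW hV hU0 hUvar hUindep
    hηcond hηindep θ0 hmodelY hmodelX hgbd γ0

end
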